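/- Let d, n be positive integers with n ≥ 1, let E = EuclideanSpace ℝ (Fin d), let σ > 0, and let k be the Gaussian kernel k(x,y) = exp(−‖x − y‖² / (2σ²)). Let z_1,…,z_n ∈ E and define F : E → ℝ by F(w) = (1/n²) Σ_{i,j=1}^n k(z'_i, z'_j)², where z'_m = z_m for m < n and z'_n = w. Then F is differentiable at z_n and its gradient there equals ∇F(z_n) = (4/(n²σ²)) · Σ_{i=1}^{n−1} exp(−‖z_i − z_n‖²/σ²) · (z_i − z_n). -/

import Mathlib

/-!
Squaring the Gaussian kernel of bandwidth `σ` gives the kernel `exp (-‖x - y‖² / σ²)`, which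
is `1` on the diagonal. Hence in the double sum defining `F w` only the `2(n-1)` off-diagonal
terms pairing `w` with some `zᵢ`, `i < n`, depend on `w`, and each of them is
`exp (-‖zᵢ - w‖² / σ²)`, whose gradient is `(2/σ²) exp (-‖zᵢ - w‖² / σ²) (zᵢ - w)`.
-/

open Finset Function

section Gradient

variable {F : Type*} [NormedAddCommGroup F] [InnerProductSpace ℝ F] [CompleteSpace F]
  {f : F → ℝ} {g x : F}

theorem HasGradientAt.const_mul (c : ℝ) (hf : HasGradientAt f g x) :
    HasGradientAt (fun y => c * f y) (c • g) x := by
  rw [hasGradientAt_iff_hasFDerivAt, map_smul]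
  exact hf.hasFDerivAt.const_mul c

theorem HasGradientAt.const_add (c : ℝ) (hf : HasGradientAt f g x) :
    HasGradientAt (fun y => c + f y) g x :=
  hf.hasFDerivAt.const_add c

theorem HasGradientAt.add_const (c : ℝ) (hf : HasGradientAt f g x) :
    HasGradientAt (fun y => f y + c) g x :=
  hf.hasFDerivAt.add_const c

theorem HasGradientAt.fun_sum {ι : Type*} {s : Finset ι} {f : ι → F → ℝ} {g : ι → F}
    (hf : ∀ i ∈ s, HasGradientAt (f i) (g i) x) :
    HasGradientAt (fun y => ∑ i ∈ s, f i y) (∑ i ∈ s, g i) x := by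
  rw [hasGradientAt_iff_hasFDerivAt, map_sum]
  exact HasFDerivAt.fun_sum fun i hi => (hf i hi).hasFDerivAt

theorem hasGradientAt_exp_neg_norm_sub_sq_div (a w : F) (s : ℝ) :
    HasGradientAt (fun w => Real.exp (-‖a - w‖ ^ 2 / s))
      ((2 / s * Real.exp (-‖a - w‖ ^ 2 / s)) • (a - w)) w := by
  have hsq := ((hasFDerivAt_id w).const_sub a).norm_sq
  have hexp := ((hasDerivAt_id (‖a - w‖ ^ 2)).neg.div_const s).exp
  rw [hasGradientAt_iff_hasFDerivAt]
  refine (hexp.comp_hasFDerivAt w hsq).congr_fderiv ?_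
  ext v
  simp only [Pi.neg_apply, id_eq, map_sub, ContinuousLinearMap.comp_neg,
    ContinuousLinearMap.comp_id, neg_sub, smul_apply,
    sub_apply, coe_innerSL_apply, nsmul_eq_mul, Nat.cast_ofNat, smul_eq_mul,
    map_smul, InnerProductSpace.toDual_apply_apply]
  ring

end Gradient

theorem sq_exp_div_two_mul (r b : ℝ) : Real.exp (r / (2 * b)) ^ 2 = Real.exp (r / b) := by
  rw [← Real.exp_nat_mul]
  congr 1
  ring

theorem sum_sum_update_last {M α : Type*} [AddCommMonoid M] {m : ℕ} (f : α → α → M)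
    (z : Fin (m + 1) → α) (w : α) :
    ∑ i, ∑ j, f (update z (Fin.last m) w i) (update z (Fin.last m) w j) =
      ∑ i : Fin m, ∑ j : Fin m, f (z i.castSucc) (z j.castSucc) +
        ∑ i : Fin m, (f (z i.castSucc) w + f w (z i.castSucc)) + f w w := by
  have hupd (i : Fin m) : update z (Fin.last m) w i.castSucc = z i.castSucc :=
    update_of_ne (Fin.castSucc_lt_last i).ne _ _
  simp only [Fin.sum_univ_castSucc, hupd, update_self, sum_add_distrib]
  abel

theorem irke_gradient_gaussian_general (d m : ℕ) (σ : ℝ)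
    (k : EuclideanSpace ℝ (Fin d) → EuclideanSpace ℝ (Fin d) → ℝ)
    (hk : k = fun x y => Real.exp (-‖x - y‖ ^ 2 / (2 * σ ^ 2)))
    (z : Fin (m + 1) → EuclideanSpace ℝ (Fin d))
    (F : EuclideanSpace ℝ (Fin d) → ℝ)
    (hF : F = fun w =>
      (1 / ((m : ℝ) + 1) ^ 2) *
        ∑ i : Fin (m + 1), ∑ j : Fin (m + 1),
          (k (Function.update z (Fin.last m) w i)
             (Function.update z (Fin.last m) w j)) ^ 2) :
    DifferentiableAt ℝ F (z (Fin.last m)) ∧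
      gradient F (z (Fin.last m)) =
        (4 / (((m : ℝ) + 1) ^ 2 * σ ^ 2)) •
          ∑ i : Fin m,
            Real.exp (-‖z i.castSucc - z (Fin.last m)‖ ^ 2 / σ ^ 2) •
              (z i.castSucc - z (Fin.last m)) := by
  set x := z (Fin.last m)
  set c : ℝ := 1 / ((m : ℝ) + 1) ^ 2 with hc
  obtain ⟨C, hF_eq⟩ : ∃ C : ℝ,
      F = fun w => c * (C + 2 * ∑ i : Fin m, Real.exp (-‖z i.castSucc - w‖ ^ 2 / σ ^ 2) + 1) := by
    refine ⟨∑ i : Fin m, ∑ j : Fin m, k (z i.castSucc) (z j.castSucc) ^ 2, funext fun w => ?_⟩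
    simp only [hF]
    rw [sum_sum_update_last (fun a b => k a b ^ 2)]
    congr 2
    · rw [add_right_inj, mul_sum]
      refine sum_congr rfl fun i _ => ?_
      simp only [hk, sq_exp_div_two_mul, norm_sub_rev w]
      ring
    · simp [hk]
  have hG : HasGradientAt F (c • (2 : ℝ) • ∑ i : Fin m,
      (2 / σ ^ 2 * Real.exp (-‖z i.castSucc - x‖ ^ 2 / σ ^ 2)) • (z i.castSucc - x)) x := by
    rw [hF_eq]
    exact ((((HasGradientAt.fun_sum fun i _ =>
      hasGradientAt_exp_neg_norm_sub_sq_div _ x _).const_mul 2).const_add C).add_const 1).const_mul c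
  refine ⟨hG.differentiableAt, hG.gradient.trans ?_⟩
  simp only [smul_sum, smul_smul]
  refine sum_congr rfl fun i _ => congrArg (· • _) ?_
  rw [hc, div_eq_mul_inv 4, mul_inv]
  ring

/-- Gradient of the inverse-RKE loss with the Gaussian kernel
`k(x,y) = exp(−‖x−y‖²/(2σ²))` with respect to the last point: the function
`F w = (1/n²) ∑ᵢ∑ⱼ k(z'ᵢ, z'ⱼ)²` (where `z'` replaces the last point by `w`)
is differentiable at `zₙ` with gradient
`(4/(n²σ²)) ∑_{i<n} exp(−‖zᵢ−zₙ‖²/σ²) • (zᵢ − zₙ)`.  Here `n = m + 1`. -/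
theorem irke_gradient_gaussian (d m : ℕ) (hd : 0 < d) (σ : ℝ) (hσ : 0 < σ)
    (k : EuclideanSpace ℝ (Fin d) → EuclideanSpace ℝ (Fin d) → ℝ)
    (hk : k = fun x y => Real.exp (-‖x - y‖ ^ 2 / (2 * σ ^ 2)))
    (z : Fin (m + 1) → EuclideanSpace ℝ (Fin d))
    (F : EuclideanSpace ℝ (Fin d) → ℝ)
    (hF : F = fun w =>
      (1 / ((m : ℝ) + 1) ^ 2) *
        ∑ i : Fin (m + 1), ∑ j : Fin (m + 1),
          (k (Function.update z (Fin.last m) w i)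
             (Function.update z (Fin.last m) w j)) ^ 2) :
    DifferentiableAt ℝ F (z (Fin.last m)) ∧
      gradient F (z (Fin.last m)) =
        (4 / (((m : ℝ) + 1) ^ 2 * σ ^ 2)) •
          ∑ i : Fin m,
            Real.exp (-‖z i.castSucc - z (Fin.last m)‖ ^ 2 / σ ^ 2) •
              (z i.castSucc - z (Fin.last m)) :=
  irke_gradient_gaussian_general d m σ k hk z F hF
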